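/- The graph G on V = {x ∈ ℤ^{n+1} : Σx_i = 0, x_i ≡ x_j (mod n+1) ∀i,j}, with x adjacent to y iff y−x is an edge vector, is vertex-transitive under translations by V; consequently, G satisfies the triangle and quadrangle conditions of weak modularity with respect to every base vertex, i.e., G is a weakly modular graph. -/

import Mathlib

open Finset

/-- The vertex set of the 1-skeleton of the Ã_n Coxeter complex:
integer vectors summing to zero with all pairwise coordinate differences divisible by n+1. -/
def inV (n : ℕ) (x : Fin (n+1) → ℤ) : Prop :=
  (∑ i, x i = 0) ∧ ∀ i j, ((n : ℤ) + 1) ∣ x i - x j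

/-- Maximum coordinate. -/
def maxC (n : ℕ) (x : Fin (n+1) → ℤ) : ℤ := univ.sup' univ_nonempty x

/-- Minimum coordinate. -/
def minC (n : ℕ) (x : Fin (n+1) → ℤ) : ℤ := univ.inf' univ_nonempty x

/-- An edge vector: coordinates sum to 0, pairwise differences divisible by n+1,
and max minus min equals n+1. -/
def isEdge (n : ℕ) (e : Fin (n+1) → ℤ) : Prop :=
  inV n e ∧ maxC n e - minC n e = (n : ℤ) + 1

/-- Height of a vertex: (max − min)/(n+1). -/
def height (n : ℕ) (x : Fin (n+1) → ℤ) : ℤ :=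
  (maxC n x - minC n x) / ((n : ℤ) + 1)

/-- The edge vector associated to a subset S: value n+1−|S| on S and −|S| off S. -/
def eVec (n : ℕ) (S : Finset (Fin (n+1))) : Fin (n+1) → ℤ :=
  fun i => if i ∈ S then (n : ℤ) + 1 - S.card else -(S.card : ℤ)

lemma inV_zero (n : ℕ) : inV n 0 := ⟨by simp, fun i j => by simp⟩

lemma maxC_neg (n : ℕ) (x : Fin (n+1) → ℤ) : maxC n (-x) = - minC n x := by
  unfold maxC minC
  apply le_antisymm
  · apply Finset.sup'_le
    intro i hi
    have h1 : univ.inf' univ_nonempty x ≤ x i := Finset.inf'_le _ hi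
    have h2 : (-x) i = -(x i) := rfl
    omega
  · obtain ⟨i, hi, h⟩ := Finset.exists_mem_eq_inf' (univ_nonempty) x
    rw [h]
    have h1 : (-x) i ≤ univ.sup' univ_nonempty (-x) := Finset.le_sup' (-x) hi
    have h2 : (-x) i = -(x i) := rfl
    omega

lemma minC_neg (n : ℕ) (x : Fin (n+1) → ℤ) : minC n (-x) = - maxC n x := by
  have := maxC_neg n (-x)
  rw [neg_neg] at this
  unfold maxC minC at *
  omega

lemma isEdge_neg {n : ℕ} {e : Fin (n+1) → ℤ} (h : isEdge n e) : isEdge n (-e) := by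
  obtain ⟨⟨h1, h2⟩, h3⟩ := h
  refine ⟨⟨by simp [h1], fun i j => by
    have h' : (-e) i - (-e) j = e j - e i := by
      simp only [Pi.neg_apply]; ring
    rw [h']; exact h2 j i⟩, ?_⟩
  rw [maxC_neg, minC_neg]
  omega

/-- The graph G on V with edge-vector adjacency. -/
def G (n : ℕ) : SimpleGraph {x : Fin (n+1) → ℤ // inV n x} where
  Adj x y := isEdge n (y.1 - x.1)
  symm := by
    constructor
    intro x y h
    have := isEdge_neg h
    rwa [neg_sub] at this
  loopless := by
    constructor
    intro x h
    obtain ⟨-, h3⟩ := h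
    rw [sub_self] at h3
    simp [maxC, minC] at h3
    omega


/-!
With `spread z = max z − min z`, the graph distance is `d(x, y) = spread (y − x) / (n + 1)`:
an edge changes the spread by at most `n + 1`, and adding `eVec n S` for a set `S` containing
every minimal and no maximal coordinate of `y − x` (a descent set) lowers it by exactly `n + 1`.
Translating the base vertex to `0`, both conditions become statements about descent sets.
Triangle: if `w = u + eVec n S` is as far from `v` as `u`, then either `S` meets the maximal
coordinates of `u − v` (remove them from `S`) or it misses some minimal one (add those to `S`);
either way we get a descent set of `u − v` whose vertex is also adjacent to `w`.
Quadrangle: for `u = s + eVec n P` and `w = s + eVec n Q`, where `P` and `Q` are descent sets of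
`s − v`, an explicit descent set from each of `u` and `w` leads to the same vertex.
-/

section Coordinates

variable {n : ℕ}

lemma le_maxC (x : Fin (n+1) → ℤ) (i : Fin (n+1)) : x i ≤ maxC n x :=
  le_sup' x (mem_univ i)

lemma minC_le (x : Fin (n+1) → ℤ) (i : Fin (n+1)) : minC n x ≤ x i :=
  inf'_le x (mem_univ i)

lemma maxC_le {x : Fin (n+1) → ℤ} {c : ℤ} (h : ∀ i, x i ≤ c) : maxC n x ≤ c :=
  sup'_le _ _ fun i _ => h i

lemma le_minC {x : Fin (n+1) → ℤ} {c : ℤ} (h : ∀ i, c ≤ x i) : c ≤ minC n x :=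
  le_inf' _ _ fun i _ => h i

lemma exists_eq_maxC (x : Fin (n+1) → ℤ) : ∃ i, x i = maxC n x := by
  obtain ⟨i, -, h⟩ := exists_mem_eq_sup' univ_nonempty x
  exact ⟨i, h.symm⟩

lemma exists_eq_minC (x : Fin (n+1) → ℤ) : ∃ i, x i = minC n x := by
  obtain ⟨i, -, h⟩ := exists_mem_eq_inf' univ_nonempty x
  exact ⟨i, h.symm⟩

variable {z : Fin (n+1) → ℤ}

lemma add_le_maxC_of_ne (hz : ∀ i j, ((n : ℤ) + 1) ∣ z i - z j) {i : Fin (n+1)}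
    (h : z i ≠ maxC n z) : z i + (n + 1) ≤ maxC n z := by
  obtain ⟨j, hj⟩ := exists_eq_maxC z
  have := le_maxC z i
  have := Int.le_of_dvd (by omega) (hz j i)
  omega

lemma minC_add_le_of_ne (hz : ∀ i j, ((n : ℤ) + 1) ∣ z i - z j) {i : Fin (n+1)}
    (h : z i ≠ minC n z) : minC n z + (n + 1) ≤ z i := by
  obtain ⟨j, hj⟩ := exists_eq_minC z
  have := minC_le z i
  have := Int.le_of_dvd (by omega) (hz i j)
  omega

end Coordinates

def spread (n : ℕ) (x : Fin (n+1) → ℤ) : ℤ := maxC n x - minC n x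

section Spread

variable {n : ℕ}

lemma spread_nonneg (x : Fin (n+1) → ℤ) : 0 ≤ spread n x := by
  have := le_maxC x 0
  have := minC_le x 0
  unfold spread
  omega

lemma spread_zero : spread n 0 = 0 := by
  simp [spread, maxC, minC]

lemma ne_maxC_of_eq_minC {z : Fin (n+1) → ℤ} (hpos : 0 < spread n z) {i : Fin (n+1)}
    (h : z i = minC n z) : z i ≠ maxC n z := by
  unfold spread at hpos
  omega

lemma spread_add_le (x y : Fin (n+1) → ℤ) : spread n (x + y) ≤ spread n x + spread n y := by
  have := maxC_le (x := x + y) fun i => add_le_add (le_maxC x i) (le_maxC y i)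
  have := le_minC (x := x + y) fun i => add_le_add (minC_le x i) (minC_le y i)
  unfold spread
  linarith

lemma dvd_spread {x : Fin (n+1) → ℤ} (hx : ∀ i j, ((n : ℤ) + 1) ∣ x i - x j) :
    ((n : ℤ) + 1) ∣ spread n x := by
  obtain ⟨i, hi⟩ := exists_eq_maxC x
  obtain ⟨j, hj⟩ := exists_eq_minC x
  unfold spread
  rw [← hi, ← hj]
  exact hx i j

lemma eq_zero_of_spread_eq_zero {x : Fin (n+1) → ℤ} (hx : ∑ i, x i = 0) (h : spread n x = 0) :
    x = 0 := by
  have hconst : ∀ i, x i = maxC n x := fun i => by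
    have := le_maxC x i
    have := minC_le x i
    unfold spread at h
    omega
  have hmax : ((n : ℤ) + 1) * maxC n x = 0 := by
    rw [← hx, sum_congr rfl fun i _ => hconst i]
    simp
  funext i
  rw [hconst i, Pi.zero_apply]
  exact (mul_eq_zero.mp hmax).resolve_left (by omega)

end Spread

section Vertices

variable {n : ℕ} {x y : Fin (n+1) → ℤ}

lemma inV_add (hx : inV n x) (hy : inV n y) : inV n (x + y) :=
  ⟨by simp [sum_add_distrib, hx.1, hy.1], fun i j => by
    simpa [add_sub_add_comm] using dvd_add (hx.2 i j) (hy.2 i j)⟩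

lemma inV_sub (hx : inV n x) (hy : inV n y) : inV n (x - y) :=
  ⟨by simp [sum_sub_distrib, hx.1, hy.1], fun i j => by
    simpa [sub_sub_sub_comm] using dvd_sub (hx.2 i j) (hy.2 i j)⟩

end Vertices

section EdgeVectors

variable {n : ℕ} {S : Finset (Fin (n+1))} {i : Fin (n+1)}

lemma eVec_of_mem (h : i ∈ S) : eVec n S i = n + 1 - S.card := if_pos h

lemma eVec_of_notMem (h : i ∉ S) : eVec n S i = -S.card := if_neg h

lemma eVec_apply (S : Finset (Fin (n+1))) (i : Fin (n+1)) :
    eVec n S i = ((n : ℤ) + 1) * (if i ∈ S then 1 else 0) - S.card := by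
  unfold eVec; split_ifs <;> ring

lemma inV_eVec (S : Finset (Fin (n+1))) : inV n (eVec n S) :=
  ⟨by simp [eVec_apply, sum_sub_distrib, mul_comm], fun i j =>
    ⟨(if i ∈ S then 1 else 0) - (if j ∈ S then 1 else 0), by rw [eVec_apply, eVec_apply]; ring⟩⟩

lemma eVec_union {A B : Finset (Fin (n+1))} (h : Disjoint A B) :
    eVec n (A ∪ B) = eVec n A + eVec n B := by
  funext i
  simp only [Pi.add_apply, eVec_apply, card_union_of_disjoint h, mem_union]
  by_cases hA : i ∈ A <;> by_cases hB : i ∈ B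
  · exact absurd hB (disjoint_left.mp h hA)
  all_goals simp [hA, hB]; ring

lemma eVec_compl (S : Finset (Fin (n+1))) : eVec n Sᶜ = -eVec n S := by
  have hcard : ((Sᶜ.card : ℕ) : ℤ) = n + 1 - S.card := by
    rw [card_compl, Fintype.card_fin, Nat.cast_sub (by simpa using card_le_univ S)]
    push_cast; ring
  funext i
  simp only [Pi.neg_apply, eVec_apply, mem_compl, hcard]
  split_ifs <;> ring

lemma eVec_add_eVec_eq {A B C D : Finset (Fin (n+1))}
    (h : ∀ i, ((if i ∈ A then 1 else 0) + (if i ∈ B then 1 else 0) : ℤ) =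
      (if i ∈ C then 1 else 0) + (if i ∈ D then 1 else 0)) :
    eVec n A + eVec n B = eVec n C + eVec n D := by
  have hcard : (A.card : ℤ) + B.card = C.card + D.card := by
    simpa [sum_add_distrib] using sum_congr (s₁ := univ) rfl fun i _ => h i
  funext i
  simp only [Pi.add_apply, eVec_apply]
  linear_combination ((n : ℤ) + 1) * h i - hcard

lemma isEdge_eVec (h₁ : S.Nonempty) (h₂ : Sᶜ.Nonempty) : isEdge n (eVec n S) := by
  obtain ⟨i, hi⟩ := h₁
  obtain ⟨j, hj⟩ := h₂
  have hmax : maxC n (eVec n S) = n + 1 - S.card := by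
    refine le_antisymm (maxC_le fun k => ?_) (eVec_of_mem (n := n) hi ▸ le_maxC _ i)
    unfold eVec; split_ifs <;> omega
  have hmin : minC n (eVec n S) = -S.card := by
    refine le_antisymm (eVec_of_notMem (mem_compl.mp hj) ▸ minC_le _ j) (le_minC fun k => ?_)
    unfold eVec; split_ifs <;> omega
  refine ⟨inV_eVec S, ?_⟩
  rw [hmax, hmin]
  ring

lemma eq_eVec_of_isEdge {e : Fin (n+1) → ℤ} (he : isEdge n e) :
    e = eVec n (univ.filter fun i => e i = maxC n e) := by
  obtain ⟨⟨hsum, hcong⟩, hgap⟩ := he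
  set T := univ.filter fun i => e i = maxC n e
  have hval : ∀ i, e i = minC n e + (n + 1) * (if i ∈ T then 1 else 0) := fun i => by
    by_cases hi : e i = maxC n e
    · simp [T, hi]; omega
    · have := add_le_maxC_of_ne hcong hi
      have := minC_le e i
      simp [T, hi]; omega
  have hmin : minC n e = -T.card := by
    have h := hsum
    rw [sum_congr rfl fun i _ => hval i] at h
    simp [sum_add_distrib] at h
    have : ((n : ℤ) + 1) * (minC n e + T.card) = 0 := by linarith
    exact eq_neg_of_add_eq_zero_left ((mul_eq_zero.mp this).resolve_left (by omega))
  funext i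
  rw [hval i, hmin, eVec_apply]
  ring

end EdgeVectors

def IsDescent (n : ℕ) (z : Fin (n+1) → ℤ) (S : Finset (Fin (n+1))) : Prop :=
  (∀ i ∈ S, z i ≠ maxC n z) ∧ ∀ i, z i = minC n z → i ∈ S

section Descent

variable {n : ℕ} {z : Fin (n+1) → ℤ} {S : Finset (Fin (n+1))}

lemma maxC_add_eVec (hz : ∀ i j, ((n : ℤ) + 1) ∣ z i - z j) (S : Finset (Fin (n+1))) :
    maxC n (z + eVec n S) =
      maxC n z - S.card + if ∃ i ∈ S, z i = maxC n z then (n : ℤ) + 1 else 0 := by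
  obtain ⟨i₀, hi₀⟩ := exists_eq_maxC z
  apply le_antisymm
  · refine maxC_le fun i => ?_
    have := le_maxC z i
    by_cases hi : i ∈ S
    · split_ifs with h
      · simp [eVec_of_mem hi]; omega
      · have := add_le_maxC_of_ne hz fun he => h ⟨i, hi, he⟩
        simp [eVec_of_mem hi]; omega
    · simp [eVec_of_notMem hi]; split_ifs <;> omega
  · split_ifs with h
    · obtain ⟨i, hi, hmax⟩ := h
      have := le_maxC (z + eVec n S) i
      simp [eVec_of_mem hi] at this; omega
    · have hi₀S : i₀ ∉ S := fun h' => h ⟨i₀, h', hi₀⟩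
      have := le_maxC (z + eVec n S) i₀
      simp [eVec_of_notMem hi₀S] at this; omega

lemma minC_add_eVec (hz : ∀ i j, ((n : ℤ) + 1) ∣ z i - z j) (S : Finset (Fin (n+1))) :
    minC n (z + eVec n S) =
      minC n z - S.card + if ∀ i, z i = minC n z → i ∈ S then (n : ℤ) + 1 else 0 := by
  obtain ⟨j₀, hj₀⟩ := exists_eq_minC z
  apply le_antisymm
  · split_ifs with h
    · have := minC_le (z + eVec n S) j₀
      simp [eVec_of_mem (h j₀ hj₀)] at this; omega
    · push Not at h
      obtain ⟨i, hmin, hi⟩ := h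
      have := minC_le (z + eVec n S) i
      simp [eVec_of_notMem hi] at this; omega
  · refine le_minC fun i => ?_
    have := minC_le z i
    by_cases hi : i ∈ S
    · simp [eVec_of_mem hi]; split_ifs <;> omega
    · split_ifs with h
      · have := minC_add_le_of_ne hz fun he => hi (h i he)
        simp [eVec_of_notMem hi]; omega
      · simp [eVec_of_notMem hi]; omega

lemma spread_add_eVec (hz : ∀ i j, ((n : ℤ) + 1) ∣ z i - z j) (S : Finset (Fin (n+1))) :
    spread n (z + eVec n S) = spread n z
      + (if ∃ i ∈ S, z i = maxC n z then (n : ℤ) + 1 else 0)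
      - (if ∀ i, z i = minC n z → i ∈ S then (n : ℤ) + 1 else 0) := by
  unfold spread
  rw [maxC_add_eVec hz, minC_add_eVec hz]
  ring

lemma spread_add_eVec_of_isDescent (hz : ∀ i j, ((n : ℤ) + 1) ∣ z i - z j)
    (hS : IsDescent n z S) : spread n (z + eVec n S) = spread n z - (n + 1) := by
  rw [spread_add_eVec hz, if_neg (by simpa using hS.1), if_pos hS.2]
  ring

lemma isDescent_of_spread_add_eVec (hz : ∀ i j, ((n : ℤ) + 1) ∣ z i - z j)
    (h : spread n (z + eVec n S) = spread n z - (n + 1)) : IsDescent n z S := by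
  rw [spread_add_eVec hz] at h
  by_cases hmax : ∃ i ∈ S, z i = maxC n z <;> by_cases hmin : ∀ i, z i = minC n z → i ∈ S <;>
    simp only [hmax, hmin, if_true, if_false] at h <;> try omega
  exact ⟨by simpa using hmax, hmin⟩

lemma isDescent_filter_eq_minC (hpos : 0 < spread n z) :
    IsDescent n z (univ.filter fun i => z i = minC n z) :=
  ⟨fun _ hi => ne_maxC_of_eq_minC hpos (mem_filter.mp hi).2, fun _ hi => by simpa using hi⟩

lemma isEdge_eVec_of_isDescent (hS : IsDescent n z S) :
    isEdge n (eVec n S) := by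
  obtain ⟨i, hi⟩ := exists_eq_maxC z
  obtain ⟨j, hj⟩ := exists_eq_minC z
  exact isEdge_eVec ⟨j, hS.2 j hj⟩ ⟨i, mem_compl.mpr fun h => hS.1 i h hi⟩

end Descent

section Triangle

variable {n : ℕ} {z : Fin (n+1) → ℤ} {S : Finset (Fin (n+1))}

lemma exists_isDescent_of_meets_maxC (hz : ∀ i j, ((n : ℤ) + 1) ∣ z i - z j)
    (hpos : 0 < spread n z) (h : spread n (z + eVec n S) = spread n z)
    (hmax : ∃ i ∈ S, z i = maxC n z) :
    ∃ T U, IsDescent n z T ∧ U.Nonempty ∧ Uᶜ.Nonempty ∧ eVec n T = eVec n S + eVec n U := by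
  have hmin : ∀ i, z i = minC n z → i ∈ S := by
    by_contra hmin
    rw [spread_add_eVec hz, if_pos hmax, if_neg hmin] at h
    omega
  obtain ⟨j, hj⟩ := exists_eq_minC z
  have hne : ∀ i, z i = minC n z → z i ≠ maxC n z := fun i => ne_maxC_of_eq_minC hpos
  set M := S.filter fun i => z i = maxC n z
  set T := S.filter fun i => z i ≠ maxC n z
  have hS : eVec n S = eVec n M + eVec n T := by
    rw [← eVec_union (disjoint_filter_filter_not S S _), filter_union_filter_not_eq]
  refine ⟨T, Mᶜ,
    ⟨fun i hi => (mem_filter.mp hi).2, fun i hi => mem_filter.mpr ⟨hmin i hi, hne i hi⟩⟩,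
    ⟨j, by simp [M, hne j hj]⟩, by rwa [compl_compl, filter_nonempty_iff], ?_⟩
  rw [eVec_compl, hS]
  abel

lemma exists_isDescent_of_not_meets_maxC (hz : ∀ i j, ((n : ℤ) + 1) ∣ z i - z j)
    (hpos : 0 < spread n z) (h : spread n (z + eVec n S) = spread n z)
    (hmax : ¬∃ i ∈ S, z i = maxC n z) :
    ∃ T U, IsDescent n z T ∧ U.Nonempty ∧ Uᶜ.Nonempty ∧ eVec n T = eVec n S + eVec n U := by
  have hmin : ¬∀ i, z i = minC n z → i ∈ S := by
    intro hmin
    rw [spread_add_eVec hz, if_neg hmax, if_pos hmin] at h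
    omega
  push Not at hmax hmin
  obtain ⟨j, hj, hjS⟩ := hmin
  obtain ⟨k, hk⟩ := exists_eq_maxC z
  set U := (univ.filter fun i => z i = minC n z) \ S
  refine ⟨S ∪ U, U, ⟨fun i hi => ?_, fun i hi => ?_⟩, ⟨j, by simp [U, hj, hjS]⟩,
    ⟨k, mem_compl.mpr fun hkU =>
      ne_maxC_of_eq_minC hpos (mem_filter.mp (mem_sdiff.mp hkU).1).2 hk⟩, eVec_union disjoint_sdiff⟩
  · rcases mem_union.mp hi with hi | hi
    · exact hmax i hi
    · exact ne_maxC_of_eq_minC hpos (mem_filter.mp (mem_sdiff.mp hi).1).2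
  · by_cases hiS : i ∈ S
    · exact mem_union_left _ hiS
    · exact mem_union_right _ (by simp [U, hi, hiS])

lemma exists_isDescent_of_spread_add_eVec_eq (hz : ∀ i j, ((n : ℤ) + 1) ∣ z i - z j)
    (hpos : 0 < spread n z) (h : spread n (z + eVec n S) = spread n z) :
    ∃ T U, IsDescent n z T ∧ U.Nonempty ∧ Uᶜ.Nonempty ∧ eVec n T = eVec n S + eVec n U := by
  by_cases hmax : ∃ i ∈ S, z i = maxC n z
  · exact exists_isDescent_of_meets_maxC hz hpos h hmax
  · exact exists_isDescent_of_not_meets_maxC hz hpos h hmax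

end Triangle

/-- The second step down, from `z + eVec n P`, in the quadrangle condition. It is chosen so that
descending from `z` by `P` and then `secondDescent n z P Q`, or by `Q` and then
`secondDescent n z Q P`, ends at the same vector. -/
def secondDescent (n : ℕ) (z : Fin (n+1) → ℤ) (P Q : Finset (Fin (n+1))) : Finset (Fin (n+1)) :=
  univ.filter fun i => z i = minC n z ∨ (i ∉ P ∧ (i ∈ Q ∨ z i = minC n z + (n + 1)))

section Quadrangle

variable {n : ℕ} {z : Fin (n+1) → ℤ} {P Q : Finset (Fin (n+1))}

lemma isDescent_secondDescent (hz : ∀ i j, ((n : ℤ) + 1) ∣ z i - z j)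
    (hP : IsDescent n z P) (hQ : IsDescent n z Q) (hpos : 0 < spread n (z + eVec n P)) :
    IsDescent n (z + eVec n P) (secondDescent n z P Q) := by
  have hmax : maxC n (z + eVec n P) = maxC n z - P.card := by
    rw [maxC_add_eVec hz, if_neg (by simpa using hP.1), add_zero]
  have hmin : minC n (z + eVec n P) = minC n z - P.card + (n + 1) := by
    rw [minC_add_eVec hz, if_pos hP.2]
  unfold spread at hpos
  rw [hmax, hmin] at hpos
  refine ⟨fun i hi => ?_, fun i hi => ?_⟩
  · simp only [secondDescent, mem_filter, mem_univ, true_and] at hi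
    rw [hmax, Pi.add_apply]
    by_cases hiP : i ∈ P
    · rw [eVec_of_mem hiP]
      rcases hi with hi | ⟨hiP', -⟩
      · omega
      · exact absurd hiP hiP'
    · rw [eVec_of_notMem hiP]
      rcases hi with hi | ⟨-, hiQ | hi⟩
      · omega
      · have := add_le_maxC_of_ne hz (hQ.1 i hiQ)
        omega
      · omega
  · simp only [secondDescent, mem_filter, mem_univ, true_and]
    rw [hmin, Pi.add_apply] at hi
    by_cases hiP : i ∈ P
    · rw [eVec_of_mem hiP] at hi
      omega
    · rw [eVec_of_notMem hiP] at hi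
      exact Or.inr ⟨hiP, Or.inr (by omega)⟩

lemma eVec_add_eVec_secondDescent (hP : IsDescent n z P) (hQ : IsDescent n z Q) :
    eVec n P + eVec n (secondDescent n z P Q) = eVec n Q + eVec n (secondDescent n z Q P) := by
  refine eVec_add_eVec_eq fun i => ?_
  have hP' := hP.2 i
  have hQ' := hQ.2 i
  simp only [secondDescent, mem_filter, mem_univ, true_and]
  by_cases hp : i ∈ P <;> by_cases hq : i ∈ Q <;> by_cases h0 : z i = minC n z <;>
    simp_all

end Quadrangle

section Graph

variable {n : ℕ} {x y : {x : Fin (n+1) → ℤ // inV n x}} {S : Finset (Fin (n+1))}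

lemma G_adj_iff : (G n).Adj x y ↔ isEdge n (y.1 - x.1) := Iff.rfl

def addEVec (x : {x : Fin (n+1) → ℤ // inV n x}) (S : Finset (Fin (n+1))) :
    {x : Fin (n+1) → ℤ // inV n x} :=
  ⟨x.1 + eVec n S, inV_add x.2 (inV_eVec S)⟩

lemma addEVec_sub (x v : {x : Fin (n+1) → ℤ // inV n x}) (S : Finset (Fin (n+1))) :
    (addEVec x S).1 - v.1 = x.1 - v.1 + eVec n S :=
  add_sub_right_comm _ _ _

lemma adj_addEVec (h : isEdge n (eVec n S)) : (G n).Adj x (addEVec x S) := by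
  rw [G_adj_iff, addEVec, add_sub_cancel_left]
  exact h

lemma exists_eq_addEVec_of_adj (h : (G n).Adj x y) : ∃ S, y = addEVec x S :=
  ⟨_, Subtype.ext (by
    change y.1 = x.1 + eVec n _
    rw [← eq_eVec_of_isEdge h, add_sub_cancel])⟩

lemma spread_sub_le_mul_length (p : (G n).Walk y x) :
    spread n (x.1 - y.1) ≤ ((n : ℤ) + 1) * p.length := by
  induction p with
  | nil => simp [spread_zero]
  | @cons y y' x h p ih =>
    have := spread_add_le (x.1 - y'.1) (y'.1 - y.1)
    have hedge : spread n (y'.1 - y.1) = n + 1 := (G_adj_iff.mp h).2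
    rw [sub_add_sub_cancel] at this
    rw [SimpleGraph.Walk.length_cons]
    push_cast
    linarith

lemma exists_walk_length_eq (k : ℕ) (h : spread n (x.1 - y.1) = ((n : ℤ) + 1) * k) :
    ∃ p : (G n).Walk y x, p.length = k := by
  induction k generalizing x with
  | zero =>
    have := eq_zero_of_spread_eq_zero (inV_sub x.2 y.2).1 (by simpa using h)
    obtain rfl : x = y := Subtype.ext (sub_eq_zero.mp this)
    exact ⟨.nil, rfl⟩
  | succ k ih =>
    have hD := isDescent_filter_eq_minC (z := x.1 - y.1) (by rw [h]; positivity)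
    obtain ⟨p, hp⟩ := ih (x := addEVec x _) (by
      rw [addEVec_sub, spread_add_eVec_of_isDescent (inV_sub x.2 y.2).2 hD, h]
      push_cast; ring)
    exact ⟨p.concat (adj_addEVec (isEdge_eVec_of_isDescent hD)).symm, by simp [hp]⟩

theorem spread_sub_eq_mul_dist (x y : {x : Fin (n+1) → ℤ // inV n x}) :
    spread n (x.1 - y.1) = ((n : ℤ) + 1) * (G n).dist x y := by
  obtain ⟨k, hk⟩ := dvd_spread (inV_sub x.2 y.2).2
  lift k to ℕ using by nlinarith [spread_nonneg (n := n) (x.1 - y.1)]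
  obtain ⟨p, hp⟩ := exists_walk_length_eq k hk
  obtain ⟨q, hq⟩ := p.reachable.exists_walk_length_eq_dist
  have hle : (G n).dist y x ≤ k := hp ▸ SimpleGraph.dist_le p
  have hge := spread_sub_le_mul_length q
  rw [hq, hk] at hge
  have : k ≤ (G n).dist y x := by exact_mod_cast le_of_mul_le_mul_left hge (by positivity)
  rw [hk, SimpleGraph.dist_comm, le_antisymm hle this]

end Graph

section WeakModularity

variable {n : ℕ} {u v w s : {x : Fin (n+1) → ℤ // inV n x}}

lemma dist_add_one_eq_of_spread (h : spread n (u.1 - v.1) + (n + 1) = spread n (w.1 - v.1)) :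
    (G n).dist u v + 1 = (G n).dist w v := by
  rw [spread_sub_eq_mul_dist, spread_sub_eq_mul_dist] at h
  have : ((n : ℤ) + 1) * ((G n).dist u v + 1 : ℕ) = ((n : ℤ) + 1) * (G n).dist w v := by
    push_cast; linarith
  exact_mod_cast mul_left_cancel₀ (by positivity) this

lemma exists_adj_adj_of_adj_of_dist_eq (huw : (G n).Adj u w)
    (h : (G n).dist u v = (G n).dist w v) (hpos : 0 < (G n).dist u v) :
    ∃ t, (G n).Adj u t ∧ (G n).Adj w t ∧ (G n).dist t v + 1 = (G n).dist u v := by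
  obtain ⟨S, rfl⟩ := exists_eq_addEVec_of_adj huw
  have hz := (inV_sub u.2 v.2).2
  have hpos' : 0 < spread n (u.1 - v.1) := by rw [spread_sub_eq_mul_dist]; positivity
  have hS : spread n (u.1 - v.1 + eVec n S) = spread n (u.1 - v.1) := by
    rw [← addEVec_sub, spread_sub_eq_mul_dist, spread_sub_eq_mul_dist, h]
  obtain ⟨T, U, hT, hU, hUc, hTU⟩ := exists_isDescent_of_spread_add_eVec_eq hz hpos' hS
  have ht : addEVec u T = addEVec (addEVec u S) U :=
    Subtype.ext (by simp only [addEVec, hTU, add_assoc])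
  refine ⟨addEVec u T, adj_addEVec (isEdge_eVec_of_isDescent hT),
    ht ▸ adj_addEVec (isEdge_eVec hU hUc), dist_add_one_eq_of_spread ?_⟩
  rw [addEVec_sub, spread_add_eVec_of_isDescent hz hT]
  ring

lemma exists_adj_adj_of_adj_adj_of_dist_eq (hsu : (G n).Adj s u) (hsw : (G n).Adj s w)
    (hu : (G n).dist u v + 1 = (G n).dist s v) (hw : (G n).dist w v + 1 = (G n).dist s v)
    (hpos : 0 < (G n).dist u v) :
    ∃ t, (G n).Adj u t ∧ (G n).Adj w t ∧ (G n).dist t v + 1 = (G n).dist u v := by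
  obtain ⟨P, rfl⟩ := exists_eq_addEVec_of_adj hsu
  obtain ⟨Q, rfl⟩ := exists_eq_addEVec_of_adj hsw
  set z := s.1 - v.1
  have hz := (inV_sub s.2 v.2).2
  have hspread : ∀ R, (G n).dist (addEVec s R) v + 1 = (G n).dist s v →
      spread n (z + eVec n R) = spread n z - (n + 1) := fun R h => by
    rw [← addEVec_sub, spread_sub_eq_mul_dist, spread_sub_eq_mul_dist, ← h]
    push_cast; ring
  have hP : IsDescent n z P := isDescent_of_spread_add_eVec hz (hspread P hu)
  have hQ : IsDescent n z Q := isDescent_of_spread_add_eVec hz (hspread Q hw)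
  have hposP : 0 < spread n (z + eVec n P) := by
    rw [← addEVec_sub, spread_sub_eq_mul_dist]; positivity
  have hposQ : 0 < spread n (z + eVec n Q) := by rw [hspread Q hw, ← hspread P hu]; exact hposP
  have hYP := isDescent_secondDescent hz hP hQ hposP
  have ht : addEVec (addEVec s P) (secondDescent n z P Q) =
      addEVec (addEVec s Q) (secondDescent n z Q P) :=
    Subtype.ext (by simp only [addEVec, add_assoc, eVec_add_eVec_secondDescent hP hQ])
  refine ⟨_, adj_addEVec (isEdge_eVec_of_isDescent hYP),
    ht ▸ adj_addEVec (isEdge_eVec_of_isDescent (isDescent_secondDescent hz hQ hP hposQ)),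
    dist_add_one_eq_of_spread ?_⟩
  rw [addEVec_sub, addEVec_sub,
    spread_add_eVec_of_isDescent (inV_add (inV_sub s.2 v.2) (inV_eVec P)).2 hYP]
  ring

end WeakModularity

theorem stmt10_general (n : ℕ) :
    (∀ (v : Fin (n+1) → ℤ), inV n v → ∀ x y : {x : Fin (n+1) → ℤ // inV n x},
      ∀ (hx' : inV n (x.1 + v)) (hy' : inV n (y.1 + v)),
        ((G n).Adj x y ↔ (G n).Adj ⟨x.1 + v, hx'⟩ ⟨y.1 + v, hy'⟩)) ∧
    (∀ (v u w : {x : Fin (n+1) → ℤ // inV n x}) (m : ℕ), 1 ≤ m →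
      (G n).Adj u w → (G n).dist u v = m → (G n).dist w v = m →
        ∃ t, (G n).Adj u t ∧ (G n).Adj w t ∧ (G n).dist t v = m - 1) ∧
    (∀ (v u w s : {x : Fin (n+1) → ℤ // inV n x}) (m : ℕ), 1 ≤ m →
      (G n).Adj s u → (G n).Adj s w →
      (G n).dist u v = m → (G n).dist w v = m → (G n).dist s v = m + 1 →
        ∃ t, (G n).Adj u t ∧ (G n).Adj w t ∧ (G n).dist t v = m - 1) := by
  refine ⟨fun v _ x y _ _ => by simp only [G_adj_iff, add_sub_add_right_eq_sub], ?_, ?_⟩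
  · intro v u w m hm huw hu hw
    obtain ⟨t, hut, hwt, ht⟩ := exists_adj_adj_of_adj_of_dist_eq huw (hu.trans hw.symm) (by omega)
    exact ⟨t, hut, hwt, by omega⟩
  · intro v u w s m hm hsu hsw hu hw hs
    obtain ⟨t, hut, hwt, ht⟩ :=
      exists_adj_adj_of_adj_adj_of_dist_eq (v := v) hsu hsw (by omega) (by omega) (by omega)
    exact ⟨t, hut, hwt, by omega⟩

/-- G is vertex-transitive under translations by V, and is weakly
modular: triangle and quadrangle conditions hold at every base vertex. -/
theorem stmt10 (n : ℕ) (hn : 1 ≤ n) :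
    (∀ (v : Fin (n+1) → ℤ), inV n v → ∀ x y : {x : Fin (n+1) → ℤ // inV n x},
      ∀ (hx' : inV n (x.1 + v)) (hy' : inV n (y.1 + v)),
        ((G n).Adj x y ↔ (G n).Adj ⟨x.1 + v, hx'⟩ ⟨y.1 + v, hy'⟩)) ∧
    (∀ (v u w : {x : Fin (n+1) → ℤ // inV n x}) (m : ℕ), 1 ≤ m →
      (G n).Adj u w → (G n).dist u v = m → (G n).dist w v = m →
        ∃ t, (G n).Adj u t ∧ (G n).Adj w t ∧ (G n).dist t v = m - 1) ∧
    (∀ (v u w s : {x : Fin (n+1) → ℤ // inV n x}) (m : ℕ), 1 ≤ m →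
      (G n).Adj s u → (G n).Adj s w →
      (G n).dist u v = m → (G n).dist w v = m → (G n).dist s v = m + 1 →
        ∃ t, (G n).Adj u t ∧ (G n).Adj w t ∧ (G n).dist t v = m - 1) :=
  stmt10_general n
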